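/- The graph of a 2-form ω on a manifold M is closed under the Courant bracket if and only if ω is closed, i.e. dω = 0. -/

import Mathlib

/- We work on a real normed space `E`, viewed as a smooth manifold with its
global chart.  Vector fields are maps `E → E` and 1-forms are maps
`E → (E →L[ℝ] ℝ)`. -/

/-- The Lie bracket of vector fields: `[X,Y](x) = DY(x)(X(x)) − DX(x)(Y(x))`. -/
noncomputable def vLie {E : Type*} [NormedAddCommGroup E] [NormedSpace ℝ E]
    (X Y : E → E) : E → E :=
  fun x => fderiv ℝ Y x (X x) - fderiv ℝ X x (Y x)

/-- The Lie derivative of a 1-form along a vector field (Cartan formula in a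
global chart): `(L_X β)(x)(v) = Dβ(x)(X(x))(v) + β(x)(DX(x)(v))`. -/
noncomputable def oneLie {E : Type*} [NormedAddCommGroup E] [NormedSpace ℝ E]
    (X : E → E) (β : E → (E →L[ℝ] ℝ)) : E → (E →L[ℝ] ℝ) :=
  fun x => fderiv ℝ β x (X x) + (β x).comp (fderiv ℝ X x)

/-- The differential of a smooth function. -/
noncomputable def dF {E : Type*} [NormedAddCommGroup E] [NormedSpace ℝ E]
    (f : E → ℝ) : E → (E →L[ℝ] ℝ) :=
  fun x => fderiv ℝ f x

/-- The antisymmetric pairing `⟨(X,α),(Y,β)⟩₋ = ½(α(Y) − β(X))`. -/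
noncomputable def pairM {E : Type*} [NormedAddCommGroup E] [NormedSpace ℝ E]
    (e₁ e₂ : (E → E) × (E → (E →L[ℝ] ℝ))) : E → ℝ :=
  fun x => (1 / 2) * (e₁.2 x (e₂.1 x) - e₂.2 x (e₁.1 x))

/-- The Courant bracket
`⟦(X,α),(Y,β)⟧ = ([X,Y], L_X β − L_Y α + d⟨(X,α),(Y,β)⟩₋)`. -/
noncomputable def courant {E : Type*} [NormedAddCommGroup E] [NormedSpace ℝ E]
    (e₁ e₂ : (E → E) × (E → (E →L[ℝ] ℝ))) :
    (E → E) × (E → (E →L[ℝ] ℝ)) :=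
  (vLie e₁.1 e₂.1,
    fun x => oneLie e₁.1 e₂.2 x - oneLie e₂.1 e₁.2 x + dF (pairM e₁ e₂) x)

section Aux
variable {E : Type*} [NormedAddCommGroup E] [NormedSpace ℝ E]

lemma fderiv_omega_apply (ω : E → (E →L[ℝ] E →L[ℝ] ℝ)) (hω : Differentiable ℝ ω)
    (x u : E) : fderiv ℝ (fun y => ω y u) x = (fderiv ℝ ω x).flip u := by
  have h := fderiv_clm_apply (hω x) (differentiableAt_const u)
  simpa using h

lemma fderiv_omega_apply2 (ω : E → (E →L[ℝ] E →L[ℝ] ℝ)) (hω : Differentiable ℝ ω)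
    (x u v d : E) : fderiv ℝ (fun y => ω y u v) x d = fderiv ℝ ω x d u v := by
  have h1 : DifferentiableAt ℝ (fun y => ω y u) x :=
    (hω x).clm_apply (differentiableAt_const u)
  have h := fderiv_clm_apply (c := fun y => ω y u) h1 (differentiableAt_const v)
  rw [show (fun y => ω y u v) = fun y => (fun y => ω y u) y v from rfl, h,
    fderiv_omega_apply ω hω]
  simp

lemma courant_graph_formula (ω : E → (E →L[ℝ] E →L[ℝ] ℝ)) (hω : ContDiff ℝ (⊤ : ℕ∞) ω)
    (hskew : ∀ x u v, ω x u v = -ω x v u)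
    (X Y : E → E) (hX : ContDiff ℝ (⊤ : ℕ∞) X) (hY : ContDiff ℝ (⊤ : ℕ∞) Y) (x w : E) :
    (courant (X, fun x => ω x (X x)) (Y, fun x => ω x (Y x))).2 x w =
      ω x (vLie X Y x) w +
        (fderiv ℝ ω x (X x) (Y x) w - fderiv ℝ ω x (Y x) (X x) w +
          fderiv ℝ ω x w (X x) (Y x)) := by
  have hdω : Differentiable ℝ ω := hω.differentiable (by simp)
  have hdX : Differentiable ℝ X := hX.differentiable (by simp)
  have hdY : Differentiable ℝ Y := hY.differentiable (by simp)
  have hα : fderiv ℝ (fun y => ω y (X y)) x =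
      (ω x).comp (fderiv ℝ X x) + (fderiv ℝ ω x).flip (X x) :=
    fderiv_clm_apply (hdω x) (hdX x)
  have hβ : fderiv ℝ (fun y => ω y (Y y)) x =
      (ω x).comp (fderiv ℝ Y x) + (fderiv ℝ ω x).flip (Y x) :=
    fderiv_clm_apply (hdω x) (hdY x)
  have hp : pairM (X, fun x => ω x (X x)) (Y, fun x => ω x (Y x)) =
      fun y => ω y (X y) (Y y) := by
    funext y
    simp only [pairM]
    rw [hskew y (Y y) (X y)]
    ring
  have hdf : fderiv ℝ (fun y => ω y (X y) (Y y)) x =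
      (ω x (X x)).comp (fderiv ℝ Y x) +
        (fderiv ℝ (fun y => ω y (X y)) x).flip (Y x) :=
    fderiv_clm_apply (c := fun y => ω y (X y)) ((hdω x).clm_apply (hdX x)) (hdY x)
  simp only [courant, oneLie, dF, vLie, hp, hα, hβ, hdf,
    ContinuousLinearMap.add_apply, ContinuousLinearMap.sub_apply,
    ContinuousLinearMap.comp_apply, ContinuousLinearMap.flip_apply, map_sub]
  have h1 := hskew x (Y x) (fderiv ℝ X x w)
  have h2 := hskew x (X x) (fderiv ℝ Y x w)
  linarith

end Aux

/-- The graph of a 2-form `ω` is closed under the Courant bracket iff `ω` is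
closed (`dω = 0`).  Closedness of the graph means that for all smooth vector
fields `X, Y`, the Courant bracket of the sections `(X, ι_X ω)` and
`(Y, ι_Y ω)` is again a section of the graph, i.e. its 1-form component is
`ι_{[X,Y]} ω`; closedness of `ω` is expressed by the coordinate formula
`dω(u,v,w) = D_uω(v,w) − D_vω(u,w) + D_wω(u,v) = 0`. -/
theorem graph_closed_under_courant_iff_closed
    {E : Type*} [NormedAddCommGroup E] [NormedSpace ℝ E]
    (ω : E → (E →L[ℝ] E →L[ℝ] ℝ)) (hω : ContDiff ℝ (⊤ : ℕ∞) ω)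
    (hskew : ∀ x u v, ω x u v = -ω x v u) :
    (∀ X Y : E → E, ContDiff ℝ (⊤ : ℕ∞) X → ContDiff ℝ (⊤ : ℕ∞) Y →
      (courant (X, fun x => ω x (X x)) (Y, fun x => ω x (Y x))).2 =
        fun x => ω x (vLie X Y x)) ↔
    (∀ x u v w : E,
      fderiv ℝ ω x u v w - fderiv ℝ ω x v u w + fderiv ℝ ω x w u v = 0) := by
  constructor
  · intro H x u v w
    have h := congrFun (H (fun _ => u) (fun _ => v) contDiff_const contDiff_const) x
    have h2 := ContinuousLinearMap.ext_iff.mp h w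
    have key := courant_graph_formula ω hω hskew (fun _ => u) (fun _ => v)
      contDiff_const contDiff_const x w
    rw [key] at h2
    simp only [vLie, fderiv_const, Pi.zero_apply, ContinuousLinearMap.zero_apply,
      sub_zero, sub_self, map_zero, zero_add] at h2 ⊢
    linarith
  · intro H X Y hX hY
    funext x
    ext w
    rw [courant_graph_formula ω hω hskew X Y hX hY x w, H x (X x) (Y x) w]
    simp
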